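/- Let X be a Fitting group (every element lies in a nilpotent normal subgroup of X, equivalently every normal closure of a single element is nilpotent). If N is a nilpotent subgroup of X that is normal and of finite index in a subgroup K of X, then K is nilpotent. -/

import Mathlib

/-!
If `k₁, …, kₘ` represent the cosets of `N` in `K`, then `K` is the join of `N` and the subgroups
`⟨kᵢ^X⟩ ⊓ K`: finitely many nilpotent normal subgroups of `K`, so `K` is nilpotent by Fitting's
theorem. For the latter, write `γ₀(H) = G`, `γ₁(H) = H`, `γᵢ₊₁(H) = ⁅γᵢ(H), H⁆`. For normal `H`, `K`
one has `⁅γᵢ(H) ⊓ γⱼ(K), H⁆ ≤ γᵢ₊₁(H) ⊓ γⱼ(K)` and symmetrically, so by induction `γₙ₊₁(H ⊔ K)` lies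
in the join of the `γᵢ(H) ⊓ γⱼ(K)` with `i + j = n + 1`; when `H`, `K` have classes `c`, `d` all of
these vanish for `n = c + d`.
-/

def IsFittingGroup (G : Type*) [Group G] : Prop :=
  ∀ x : G, Group.IsNilpotent (Subgroup.normalClosure ({x} : Set G))

open Group

namespace Subgroup

variable {G : Type*} [Group G]

theorem commutator_le_iff_le_comap_centralizer {A L M : Subgroup G} [M.Normal] :
    ⁅A, L⁆ ≤ M ↔
      A ≤ (centralizer (L.map (QuotientGroup.mk' M) : Set (G ⧸ M))).comap
        (QuotientGroup.mk' M) := by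
  rw [← map_le_iff_le_comap, ← commutator_eq_bot_iff_le_centralizer, ← map_commutator,
    map_eq_bot_iff, QuotientGroup.ker_mk']

theorem iSup_commutator_le {ι : Sort*} {f : ι → Subgroup G} {L M : Subgroup G} [M.Normal]
    (h : ∀ i, ⁅f i, L⁆ ≤ M) : ⁅⨆ i, f i, L⁆ ≤ M :=
  commutator_le_iff_le_comap_centralizer.mpr <|
    iSup_le fun i => commutator_le_iff_le_comap_centralizer.mp (h i)

theorem sup_commutator_le {A B L M : Subgroup G} [M.Normal] (hA : ⁅A, L⁆ ≤ M) (hB : ⁅B, L⁆ ≤ M) :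
    ⁅A ⊔ B, L⁆ ≤ M :=
  commutator_le_iff_le_comap_centralizer.mpr <|
    sup_le (commutator_le_iff_le_comap_centralizer.mp hA)
      (commutator_le_iff_le_comap_centralizer.mp hB)

/-- `γᵢ(H)`, indexed so that `γ₀(H) = G` and `γ₁(H) = H`. -/
def shiftedLowerCentralSeries (H : Subgroup G) : ℕ → Subgroup G
  | 0 => ⊤
  | n + 1 => H.lowerCentralSeries n

instance shiftedLowerCentralSeries_normal (H : Subgroup G) [H.Normal] (n : ℕ) :
    (H.shiftedLowerCentralSeries n).Normal := by
  cases n <;> unfold shiftedLowerCentralSeries <;> infer_instance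

theorem commutator_shiftedLowerCentralSeries_le (H : Subgroup G) [H.Normal] (n : ℕ) :
    ⁅H.shiftedLowerCentralSeries n, H⁆ ≤ H.shiftedLowerCentralSeries (n + 1) := by
  cases n with
  | zero => exact commutator_le_right ⊤ H
  | succ n => exact le_rfl

theorem shiftedLowerCentralSeries_eq_bot {H : Subgroup G} {c n : ℕ}
    (hc : H.lowerCentralSeries c = ⊥) (hn : c < n) : H.shiftedLowerCentralSeries n = ⊥ := by
  obtain ⟨n, rfl⟩ := Nat.exists_eq_add_one_of_ne_zero (Nat.ne_zero_of_lt hn)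
  exact eq_bot_iff.mpr (hc ▸ H.lowerCentralSeries_antitone (Nat.lt_add_one_iff.mp hn))

open Finset in
def fittingBound (H K : Subgroup G) (n : ℕ) : Subgroup G :=
  ⨆ p ∈ antidiagonal (n + 1), H.shiftedLowerCentralSeries p.1 ⊓ K.shiftedLowerCentralSeries p.2

theorem fittingBound_eq_bot {H K : Subgroup G} {c d : ℕ} (hc : H.lowerCentralSeries c = ⊥)
    (hd : K.lowerCentralSeries d = ⊥) : fittingBound H K (c + d) = ⊥ := by
  refine eq_bot_iff.mpr <| iSup₂_le fun p hp => ?_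
  rw [Finset.HasAntidiagonal.mem_antidiagonal] at hp
  rcases Nat.lt_or_ge c p.1 with h | h
  · exact (inf_le_left.trans (shiftedLowerCentralSeries_eq_bot hc h).le)
  · exact (inf_le_right.trans (shiftedLowerCentralSeries_eq_bot hd (by omega)).le)

section Fitting

variable {H K : Subgroup G} [H.Normal] [K.Normal]

instance fittingBound_normal (n : ℕ) : (fittingBound H K n).Normal := by
  unfold fittingBound; infer_instance

theorem commutator_fittingBound_left_le (n : ℕ) :
    ⁅fittingBound H K n, H⁆ ≤ fittingBound H K (n + 1) :=
  iSup_commutator_le fun p => iSup_commutator_le fun hp =>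
    le_iSup₂_of_le (p.1 + 1, p.2) (by simp at hp ⊢; omega) <|
      le_inf ((commutator_mono inf_le_left le_rfl).trans
          (commutator_shiftedLowerCentralSeries_le H p.1))
        ((commutator_le_left _ _).trans inf_le_right)

theorem commutator_fittingBound_right_le (n : ℕ) :
    ⁅fittingBound H K n, K⁆ ≤ fittingBound H K (n + 1) :=
  iSup_commutator_le fun p => iSup_commutator_le fun hp =>
    le_iSup₂_of_le (p.1, p.2 + 1) (by simp at hp ⊢; omega) <|
      le_inf ((commutator_le_left _ _).trans inf_le_left)
        ((commutator_mono inf_le_right le_rfl).trans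
          (commutator_shiftedLowerCentralSeries_le K p.2))

theorem lowerCentralSeries_sup_le_fittingBound (n : ℕ) :
    (H ⊔ K).lowerCentralSeries n ≤ fittingBound H K n := by
  induction n with
  | zero =>
    exact sup_le (le_iSup₂_of_le (1, 0) (by simp) (le_inf le_rfl le_top))
      (le_iSup₂_of_le (0, 1) (by simp) (le_inf le_top le_rfl))
  | succ n ih =>
    rw [lowerCentralSeries_succ, commutator_comm]
    refine (commutator_mono le_rfl ih).trans (sup_commutator_le ?_ ?_)
    · rw [commutator_comm]; exact commutator_fittingBound_left_le n
    · rw [commutator_comm]; exact commutator_fittingBound_right_le n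

theorem isNilpotent_sup (hH : IsNilpotent H) (hK : IsNilpotent K) : IsNilpotent ↥(H ⊔ K) := by
  obtain ⟨c, hc⟩ := (isNilpotent_iff_lowerCentralSeries H).mp hH
  obtain ⟨d, hd⟩ := (isNilpotent_iff_lowerCentralSeries K).mp hK
  exact isNilpotent_of_lowerCentralSeries_eq_bot <| eq_bot_iff.mpr <|
    fittingBound_eq_bot hc hd ▸ lowerCentralSeries_sup_le_fittingBound (c + d)

end Fitting

theorem isNilpotent_biSup {ι : Type*} (s : Finset ι) {f : ι → Subgroup G} [∀ i, (f i).Normal]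
    (hf : ∀ i, IsNilpotent (f i)) : IsNilpotent ↥(⨆ i ∈ s, f i) := by
  classical
  induction s using Finset.induction_on with
  | empty =>
    rw [show ⨆ i ∈ (∅ : Finset ι), f i = ⊥ by simp]
    exact isNilpotent_of_subsingleton
  | insert a s _ ih => rw [Finset.iSup_insert]; exact isNilpotent_sup (hf a) ih

theorem isNilpotent_iSup {ι : Type*} [Finite ι] {f : ι → Subgroup G} [∀ i, (f i).Normal]
    (hf : ∀ i, IsNilpotent (f i)) : IsNilpotent ↥(⨆ i, f i) := by
  have := Fintype.ofFinite ι
  have h := isNilpotent_biSup Finset.univ hf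
  rwa [show ⨆ i ∈ Finset.univ, f i = ⨆ i, f i by simp] at h

theorem isNilpotent_of_le {S T : Subgroup G} (hST : S ≤ T) (hT : IsNilpotent T) :
    IsNilpotent S := by
  obtain ⟨n, hn⟩ := (isNilpotent_iff_lowerCentralSeries T).mp hT
  exact isNilpotent_of_lowerCentralSeries_eq_bot (n := n) <| eq_bot_iff.mpr <|
    hn ▸ lowerCentralSeries_mono n hST

theorem isNilpotent_subgroupOf {A : Subgroup G} (hA : IsNilpotent A) (K : Subgroup G) :
    IsNilpotent (A.subgroupOf K) :=
  (isNilpotent_congr <| (equivMapOfInjective _ _ K.subtype_injective).trans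
    (MulEquiv.subgroupCongr (subgroupOf_map_subtype A K))).mpr (isNilpotent_of_le inf_le_left hA)

end Subgroup

open Subgroup in
theorem Group.isNilpotent_of_finiteIndex {G : Type*} [Group G] {N : Subgroup G} [N.Normal]
    [N.FiniteIndex] (hN : IsNilpotent N)
    (hG : ∀ g : G, ∃ M : Subgroup G, M.Normal ∧ IsNilpotent M ∧ g ∈ M) : IsNilpotent G := by
  choose M hMnormal hMnil hgM using hG
  have htop : N ⊔ ⨆ q : G ⧸ N, M q.out = ⊤ := by
    refine eq_top_iff.mpr fun g _ => ?_
    obtain ⟨n, hn⟩ := QuotientGroup.mk_out_eq_mul N g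
    have hg : g = (g : G ⧸ N).out * (n : G)⁻¹ := by rw [hn]; group
    rw [hg]
    exact mul_mem (mem_sup_right (mem_iSup_of_mem _ (hgM _))) (mem_sup_left (inv_mem n.2))
  rw [← isNilpotent_top, ← htop]
  exact isNilpotent_sup hN (isNilpotent_iSup fun q => hMnil q.out)

theorem stmt_2_general {X : Type*} [Group X] (hX : IsFittingGroup X)
    (N K : Subgroup X)
    (hNnil : Group.IsNilpotent N)
    (hNnorm : (N.subgroupOf K).Normal)
    (hNfin : (N.subgroupOf K).FiniteIndex) :
    Group.IsNilpotent K :=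
  isNilpotent_of_finiteIndex (Subgroup.isNilpotent_subgroupOf hNnil K) fun k =>
    ⟨_, Subgroup.normal_subgroupOf, Subgroup.isNilpotent_subgroupOf (hX k) K,
      Subgroup.subset_normalClosure rfl⟩

/-- In a Fitting group, a subgroup with a nilpotent normal subgroup of finite
index is nilpotent. -/
theorem stmt_2 {X : Type*} [Group X] (hX : IsFittingGroup X)
    (N K : Subgroup X) (hNK : N ≤ K)
    (hNnil : Group.IsNilpotent N)
    (hNnorm : (N.subgroupOf K).Normal)
    (hNfin : (N.subgroupOf K).FiniteIndex) :
    Group.IsNilpotent K :=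
  stmt_2_general hX N K hNnil hNnorm hNfin
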